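/- arXiv:2509.19829 — 2 statements merged into one kernel-verified Lean document; each statement's English description precedes it below -/
import Mathlib

section
/- Let B be a Blaschke product with Property 𝔅 and let α be a zero of B. Then there exists θ ∈ (0,1) such that the connected component of the level set Ω_{B,θ} = {z ∈ 𝔻 : |B(z)| < θ} containing α contains no zero of B other than α. -/
noncomputable section

/-- The level set Ω_{f,θ} = {z ∈ 𝔻 : |f(z)| < θ}. -/
def levelSet (f : ℂ → ℂ) (θ : ℝ) : Set ℂ :=
  {z : ℂ | ‖z‖ < 1 ∧ ‖f z‖ < θ}

/-- An inner function: holomorphic and bounded by 1 on 𝔻, with radial limits of modulus 1 a.e. -/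
def IsInner (u : ℂ → ℂ) : Prop :=
  DifferentiableOn ℂ u (Metric.ball (0:ℂ) 1) ∧
  (∀ z ∈ Metric.ball (0:ℂ) 1, ‖u z‖ ≤ 1) ∧
  (∀ᵐ θ : ℝ ∂MeasureTheory.volume,
    Filter.Tendsto
      (fun r : ℝ => ‖u ((r : ℂ) * Complex.exp ((θ : ℂ) * Complex.I))‖)
      (nhdsWithin 1 (Set.Iio 1)) (nhds 1))

/-- The pseudo-hyperbolic distance on 𝔻. -/
def pseudoDist (z w : ℂ) : ℝ :=
  ‖z - w‖ / ‖1 - (starRingEnd ℂ) z * w‖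

/-- δ_{u,η} : sup of pseudo-hyperbolic distances of pairs lying in a common component of Ω_{u,η}. -/
def deltaLevel (u : ℂ → ℂ) (η : ℝ) : ℝ :=
  sSup {d : ℝ | ∃ z₁ z₂ : ℂ, z₁ ∈ levelSet u η ∧
    z₂ ∈ connectedComponentIn (levelSet u η) z₁ ∧ d = pseudoDist z₁ z₂}

/-- Property 𝔅. -/
def PropertyB (u : ℂ → ℂ) : Prop :=
  ∀ θ ∈ Set.Ioo (0:ℝ) 1, ∀ z ∈ levelSet u θ,
    closure (connectedComponentIn (levelSet u θ) z) ⊆ Metric.ball (0:ℂ) 1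

/-- θ-weak Property 𝔅. -/
def WeakPropertyBAt (u : ℂ → ℂ) (θ : ℝ) : Prop :=
  θ ∈ Set.Ioo (0:ℝ) 1 ∧ ∀ z ∈ levelSet u θ,
    closure (connectedComponentIn (levelSet u θ) z) ⊆ Metric.ball (0:ℂ) 1

/-- η-weak Property 𝔥. -/
def WeakPropertyHAt (u : ℂ → ℂ) (η : ℝ) : Prop :=
  WeakPropertyBAt u η ∧ deltaLevel u η < 1

/-- Supremum norm over the unit disk. -/
def supNormD (f : ℂ → ℂ) : ℝ :=
  ⨆ z : (Metric.ball (0:ℂ) 1), ‖f (z : ℂ)‖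

/-- A Blaschke product. -/
def IsBlaschkeProduct (B : ℂ → ℂ) : Prop :=
  ∃ (ι : Type) (_ : Countable ι) (m : ℕ) (lam : ℂ) (α : ι → ℂ),
    ‖lam‖ = 1 ∧
    (∀ n, ‖α n‖ < 1 ∧ α n ≠ 0) ∧
    (Summable fun n => 1 - ‖α n‖) ∧
    ∀ z ∈ Metric.ball (0:ℂ) 1,
      B z = lam * z ^ m *
        ∏' n, ((‖α n‖ : ℂ) / α n) * ((α n - z) / (1 - (starRingEnd ℂ) (α n) * z))

/-- Order of vanishing (multiplicity of zero) via iterated derivatives. -/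
def zeroOrder (f : ℂ → ℂ) (z : ℂ) : ℕ :=
  sInf {n : ℕ | iteratedDeriv n f z ≠ 0}

/-!
A Blaschke product is holomorphic on 𝔻, because `|1 - b_w(z)| ≤ (1 - |w|)(1 + |z|)/(1 - |z|)` makes
the product of its factors converge locally uniformly, and its zeros in 𝔻 form a countable set.
A countable set has empty interior, so by the identity theorem for analytic germs every point of 𝔻
is at worst an isolated zero of `B`. Take a circle around `α`, inside 𝔻, on whose closed disc `α` is
the only possible zero, and `θ` below `min |B|` over the circle: a connected subset of `Ω_{B,θ}`
through `α` cannot meet the circle, so it stays in the disc.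
-/

open Metric Filter Topology

section

variable {X : Type*} [PseudoMetricSpace X]

theorem connectedComponentIn_subset_ball_of_disjoint_sphere {T : Set X} {x : X} {r : ℝ}
    (hr : 0 < r) (hT : Disjoint T (sphere x r)) : connectedComponentIn T x ⊆ ball x r := by
  by_cases hx : x ∈ T
  · have hcover : connectedComponentIn T x ⊆ ball x r ∪ (closedBall x r)ᶜ := by
      intro y hy
      have hys : y ∉ sphere x r := hT.notMem_of_mem_left (connectedComponentIn_subset T x hy)
      rcases lt_or_ge (dist y x) r with h | h
      · exact Or.inl h
      · exact Or.inr fun h' => hys (le_antisymm h' h)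
    refine isPreconnected_connectedComponentIn.subset_left_of_subset_union isOpen_ball
      isClosed_closedBall.isOpen_compl ?_ hcover ?_
    · exact Set.disjoint_compl_right_iff_subset.2 ball_subset_closedBall
    · exact ⟨x, mem_connectedComponentIn hx, mem_ball_self hr⟩
  · simp [connectedComponentIn_eq_empty hx]

theorem exists_pos_forall_connectedComponentIn_subset_ball [ProperSpace X] {F : Type*}
    [NormedAddCommGroup F] {f : X → F} {x : X} {r : ℝ} (hr : 0 < r)
    (hf : ContinuousOn f (sphere x r)) (hf₀ : ∀ y ∈ sphere x r, f y ≠ 0) :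
    ∃ θ > 0, ∀ T : Set X, (∀ y ∈ T, ‖f y‖ < θ) → connectedComponentIn T x ⊆ ball x r := by
  obtain ⟨θ, hθ, hθf⟩ := (isCompact_sphere x r).exists_forall_le' hf.norm
    fun y hy => norm_pos_iff.2 (hf₀ y hy)
  refine ⟨θ, hθ, fun T hT => connectedComponentIn_subset_ball_of_disjoint_sphere hr ?_⟩
  exact Set.disjoint_left.2 fun y hyT hyS => (hT y hyT).not_ge (hθf y hyS)

end

theorem AnalyticAt.eventually_ne_zero_of_countable_zeros {𝕜 E : Type*} [NontriviallyNormedField 𝕜]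
    [CompleteSpace 𝕜] [NormedAddCommGroup E] [NormedSpace 𝕜 E] {f : 𝕜 → E} {x : 𝕜} {s : Set 𝕜}
    (hf : AnalyticAt 𝕜 f x) (hs : s ∈ 𝓝 x) (hZ : {z ∈ s | f z = 0}.Countable) :
    ∀ᶠ z in 𝓝[≠] x, f z ≠ 0 := by
  refine hf.eventually_eq_zero_or_eventually_ne_zero.resolve_left fun hzero => ?_
  have hint : x ∈ interior {z ∈ s | f z = 0} := mem_interior_iff_mem_nhds.2 (inter_mem hs hzero)
  rw [interior_eq_empty_iff_dense_compl.2 (hZ.dense_compl 𝕜)] at hint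
  exact hint

def blaschkeFactor (w z : ℂ) : ℂ :=
  (‖w‖ : ℂ) / w * ((w - z) / (1 - starRingEnd ℂ w * z))

section BlaschkeFactor

variable {w z : ℂ}

theorem one_sub_norm_le_norm_one_sub_conj_mul (hw : ‖w‖ ≤ 1) :
    1 - ‖z‖ ≤ ‖1 - starRingEnd ℂ w * z‖ := by
  have h : ‖starRingEnd ℂ w * z‖ ≤ ‖z‖ := by
    rw [norm_mul, Complex.norm_conj]
    exact mul_le_of_le_one_left (norm_nonneg z) hw
  calc 1 - ‖z‖ ≤ ‖(1 : ℂ)‖ - ‖starRingEnd ℂ w * z‖ := by rw [norm_one]; linarith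
    _ ≤ ‖1 - starRingEnd ℂ w * z‖ := norm_sub_norm_le _ _

theorem one_sub_conj_mul_ne_zero (hw : ‖w‖ ≤ 1) (hz : ‖z‖ < 1) :
    1 - starRingEnd ℂ w * z ≠ 0 :=
  norm_pos_iff.1 ((sub_pos.2 hz).trans_le (one_sub_norm_le_norm_one_sub_conj_mul hw))

theorem blaschkeFactor_sub_one (hw₀ : w ≠ 0) (hD : 1 - starRingEnd ℂ w * z ≠ 0) :
    blaschkeFactor w z - 1 = (‖w‖ - 1) * (w + ‖w‖ * z) / (w * (1 - starRingEnd ℂ w * z)) := by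
  have hconj : starRingEnd ℂ w * w = (‖w‖ : ℂ) ^ 2 := by
    rw [mul_comm, Complex.mul_conj, Complex.normSq_eq_norm_sq, Complex.ofReal_pow]
  have hmul : blaschkeFactor w z * (w * (1 - starRingEnd ℂ w * z)) = ‖w‖ * (w - z) := by
    rw [blaschkeFactor, div_mul_div_comm, div_mul_cancel₀ _ (mul_ne_zero hw₀ hD)]
  rw [eq_div_iff (mul_ne_zero hw₀ hD)]
  linear_combination hmul + z * hconj

theorem norm_blaschkeFactor_sub_one_le (hw₀ : w ≠ 0) (hw : ‖w‖ ≤ 1) (hz : ‖z‖ < 1) :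
    ‖blaschkeFactor w z - 1‖ ≤ (1 - ‖w‖) * (1 + ‖z‖) / (1 - ‖z‖) := by
  have hD := one_sub_norm_le_norm_one_sub_conj_mul (z := z) hw
  have hw' : 0 < ‖w‖ := norm_pos_iff.2 hw₀
  have hnum : ‖w + ‖w‖ * z‖ ≤ ‖w‖ * (1 + ‖z‖) := by
    refine (norm_add_le _ _).trans_eq ?_
    rw [norm_mul, Complex.norm_real, Real.norm_of_nonneg hw'.le]
    ring
  rw [blaschkeFactor_sub_one hw₀ (one_sub_conj_mul_ne_zero hw hz), norm_div, norm_mul, norm_mul,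
    show ‖(‖w‖ : ℂ) - 1‖ = 1 - ‖w‖ by
      rw [← Complex.ofReal_one, ← Complex.ofReal_sub, Complex.norm_real, Real.norm_eq_abs,
        abs_of_nonpos (by linarith)]
      ring]
  have hz' : 0 < 1 - ‖z‖ := sub_pos.2 hz
  calc (1 - ‖w‖) * ‖w + ‖w‖ * z‖ / (‖w‖ * ‖1 - starRingEnd ℂ w * z‖)
      ≤ (1 - ‖w‖) * (‖w‖ * (1 + ‖z‖)) / (‖w‖ * (1 - ‖z‖)) := by
        gcongr
    _ = (1 - ‖w‖) * (1 + ‖z‖) / (1 - ‖z‖) := by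
        rw [mul_left_comm, mul_div_mul_left _ _ hw'.ne']

theorem blaschkeFactor_ne_zero (hw₀ : w ≠ 0) (hw : ‖w‖ ≤ 1) (hz : ‖z‖ < 1) (hzw : z ≠ w) :
    blaschkeFactor w z ≠ 0 :=
  mul_ne_zero (div_ne_zero (by exact_mod_cast norm_ne_zero_iff.2 hw₀) hw₀)
    (div_ne_zero (sub_ne_zero.2 hzw.symm) (one_sub_conj_mul_ne_zero hw hz))

theorem differentiableOn_blaschkeFactor (hw : ‖w‖ ≤ 1) :
    DifferentiableOn ℂ (blaschkeFactor w) (ball 0 1) :=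
  (differentiableOn_const _).mul (((differentiableOn_const w).sub differentiableOn_id).div
    ((differentiableOn_const 1).sub ((differentiableOn_const _).mul differentiableOn_id))
    fun _ hz => one_sub_conj_mul_ne_zero hw (mem_ball_zero_iff.1 hz))

end BlaschkeFactor

section BlaschkeProduct

variable {ι : Type*} {a : ι → ℂ}

theorem hasProdLocallyUniformlyOn_blaschkeFactor (ha₀ : ∀ n, a n ≠ 0) (ha : ∀ n, ‖a n‖ ≤ 1)
    (hsum : Summable fun n => 1 - ‖a n‖) {r : ℝ} (hr : r < 1) :
    HasProdLocallyUniformlyOn (fun n => blaschkeFactor (a n))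
      (fun z => ∏' n, blaschkeFactor (a n) z) (ball 0 r) := by
  have hbound : ∀ n, ∀ z ∈ ball (0 : ℂ) r,
      ‖blaschkeFactor (a n) z - 1‖ ≤ (1 - ‖a n‖) * ((1 + r) / (1 - r)) := by
    intro n z hz
    have hzr : ‖z‖ < r := mem_ball_zero_iff.1 hz
    rw [← mul_div_assoc]
    refine (norm_blaschkeFactor_sub_one_le (ha₀ n) (ha n) (hzr.trans hr)).trans ?_
    have : 0 ≤ 1 - ‖a n‖ := sub_nonneg.2 (ha n)
    gcongr
    exact mul_nonneg this (by linarith [norm_nonneg z])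
  simpa only [add_sub_cancel] using Summable.hasProdLocallyUniformlyOn_one_add
    (f := fun n z => blaschkeFactor (a n) z - 1) isOpen_ball (hsum.mul_right _)
    (Eventually.of_forall hbound) fun n => ((differentiableOn_blaschkeFactor (ha n)).mono
      (ball_subset_ball hr.le)).continuousOn.sub continuousOn_const

theorem differentiableOn_tprod_blaschkeFactor (ha₀ : ∀ n, a n ≠ 0) (ha : ∀ n, ‖a n‖ ≤ 1)
    (hsum : Summable fun n => 1 - ‖a n‖) :
    DifferentiableOn ℂ (fun z => ∏' n, blaschkeFactor (a n) z) (ball 0 1) := by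
  intro z hz
  obtain ⟨r, hzr, hr⟩ := exists_between (mem_ball_zero_iff.1 hz)
  have hdiff := (hasProdLocallyUniformlyOn_blaschkeFactor ha₀ ha hsum hr).differentiableOn
    (Eventually.of_forall fun s => DifferentiableOn.fun_finsetProd fun n _ =>
      (differentiableOn_blaschkeFactor (ha n)).mono (ball_subset_ball hr.le)) isOpen_ball
  exact (hdiff.differentiableAt (isOpen_ball.mem_nhds (mem_ball_zero_iff.2 hzr)))
    |>.differentiableWithinAt

theorem tprod_blaschkeFactor_ne_zero (ha₀ : ∀ n, a n ≠ 0) (ha : ∀ n, ‖a n‖ ≤ 1)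
    (hsum : Summable fun n => 1 - ‖a n‖) {z : ℂ} (hz : ‖z‖ < 1) (hza : ∀ n, z ≠ a n) :
    ∏' n, blaschkeFactor (a n) z ≠ 0 := by
  have hbound : ∀ n, ‖blaschkeFactor (a n) z - 1‖ ≤ (1 - ‖a n‖) * ((1 + ‖z‖) / (1 - ‖z‖)) :=
    fun n => (norm_blaschkeFactor_sub_one_le (ha₀ n) (ha n) hz).trans_eq (mul_div_assoc _ _ _)
  simpa only [add_sub_cancel] using tprod_one_add_ne_zero_of_summable
    (f := fun n => blaschkeFactor (a n) z - 1)
    (fun n => by simpa only [add_sub_cancel] using blaschkeFactor_ne_zero (ha₀ n) (ha n) hz (hza n))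
    ((hsum.mul_right _).of_nonneg_of_le (fun _ => norm_nonneg _) hbound)

end BlaschkeProduct

namespace IsBlaschkeProduct

variable {B : ℂ → ℂ}

theorem differentiableOn (hB : IsBlaschkeProduct B) : DifferentiableOn ℂ B (ball 0 1) := by
  obtain ⟨ι, -, m, lam, a, -, ha, hsum, hBeq⟩ := hB
  exact (((differentiableOn_const lam).mul (differentiableOn_pow m)).mul
    (differentiableOn_tprod_blaschkeFactor (fun n => (ha n).2) (fun n => (ha n).1.le) hsum)).congr
    hBeq

theorem countable_zeros (hB : IsBlaschkeProduct B) : {z ∈ ball (0 : ℂ) 1 | B z = 0}.Countable := by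
  obtain ⟨ι, hι, m, lam, a, hlam, ha, hsum, hBeq⟩ := hB
  refine ((Set.countable_range a).insert 0).mono fun z ⟨hz, hBz⟩ => ?_
  by_contra hmem
  simp only [Set.mem_insert_iff, Set.mem_range, not_or, not_exists] at hmem
  have hlam₀ : lam ≠ 0 := norm_ne_zero_iff.1 (hlam ▸ one_ne_zero)
  refine absurd hBz ?_
  rw [hBeq z hz]
  exact mul_ne_zero (mul_ne_zero hlam₀ (pow_ne_zero m hmem.1))
    (tprod_blaschkeFactor_ne_zero (fun n => (ha n).2) (fun n => (ha n).1.le) hsum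
      (mem_ball_zero_iff.1 hz) fun n h => hmem.2 n h.symm)

theorem eventually_ne_zero (hB : IsBlaschkeProduct B) {α : ℂ} (hα : α ∈ ball (0 : ℂ) 1) :
    ∀ᶠ z in 𝓝[≠] α, B z ≠ 0 :=
  (hB.differentiableOn.analyticAt (isOpen_ball.mem_nhds hα)).eventually_ne_zero_of_countable_zeros
    (isOpen_ball.mem_nhds hα) hB.countable_zeros

end IsBlaschkeProduct

theorem stmt3_general (B : ℂ → ℂ) (hB : IsBlaschkeProduct B)
    (α : ℂ) (hα : α ∈ Metric.ball (0:ℂ) 1) :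
    ∃ θ ∈ Set.Ioo (0:ℝ) 1,
      ∀ β ∈ connectedComponentIn (levelSet B θ) α, B β = 0 → β = α := by
  obtain ⟨ε, hε, hball⟩ := nhds_basis_closedBall.eventually_iff.1
    ((isOpen_ball.eventually_mem hα).and (eventually_nhdsWithin_iff.1 (hB.eventually_ne_zero hα)))
  obtain ⟨θ, hθ, hθT⟩ := exists_pos_forall_connectedComponentIn_subset_ball hε
    (hB.differentiableOn.continuousOn.mono fun y hy => (hball (sphere_subset_closedBall hy)).1)
    fun y hy => (hball (sphere_subset_closedBall hy)).2 (ne_of_mem_sphere hy hε.ne')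
  refine ⟨min θ (1 / 2), ⟨by positivity, by linarith [min_le_right θ (1 / 2)]⟩, fun β hβ hBβ => ?_⟩
  have hβε := hθT _ (fun y hy => hy.2.trans_le (min_le_left _ _)) hβ
  by_contra hne
  exact (hball (ball_subset_closedBall hβε)).2 hne hBβ

/-- For a Blaschke product with Property 𝔅 and a zero α of B, there exists θ ∈ (0,1) such that
the component of Ω_{B,θ} containing α contains no other zero of B. -/
theorem stmt3 (B : ℂ → ℂ) (hB : IsBlaschkeProduct B) (hPB : PropertyB B)
    (α : ℂ) (hα : α ∈ Metric.ball (0:ℂ) 1) (hBα : B α = 0) :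
    ∃ θ ∈ Set.Ioo (0:ℝ) 1,
      ∀ β ∈ connectedComponentIn (levelSet B θ) α, B β = 0 → β = α :=
  stmt3_general B hB α hα

end
end

section
/- The set of inner functions with weak Property 𝔅 is open in the space of all inner functions with the supremum norm: for every inner function u with weak Property 𝔅 there exists ε > 0 such that every inner function v with ‖v − u‖_∞ < ε (where ‖f‖_∞ = sup_{z∈𝔻} |f(z)|) also has weak Property 𝔅. -/
noncomputable section

lemma supNormD_nonneg (f : ℂ → ℂ) : 0 ≤ supNormD f :=
  Real.iSup_nonneg fun _ => norm_nonneg _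

-- The bound `C` is needed: `supNormD` of a function unbounded on the disk is the junk value `0`.
lemma norm_le_supNormD {f : ℂ → ℂ} {C : ℝ} (hf : ∀ z ∈ Metric.ball (0:ℂ) 1, ‖f z‖ ≤ C)
    {z : ℂ} (hz : z ∈ Metric.ball (0:ℂ) 1) : ‖f z‖ ≤ supNormD f :=
  le_ciSup (f := fun w : Metric.ball (0:ℂ) 1 => ‖f w‖)
    ⟨C, by rintro _ ⟨w, rfl⟩; exact hf w w.2⟩ ⟨z, hz⟩

lemma levelSet_sub_subset {u v : ℂ → ℂ} {δ : ℝ}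
    (h : ∀ z ∈ Metric.ball (0:ℂ) 1, ‖v z - u z‖ ≤ δ) (θ : ℝ) :
    levelSet v (θ - δ) ⊆ levelSet u θ := by
  rintro z ⟨hz, hvz⟩
  refine ⟨hz, ?_⟩
  calc ‖u z‖ ≤ ‖v z‖ + ‖v z - u z‖ := norm_le_insert (v z) (u z)
    _ < θ - δ + δ := add_lt_add_of_lt_of_le hvz (h z (mem_ball_zero_iff.2 hz))
    _ = θ := sub_add_cancel θ δ

lemma WeakPropertyBAt.of_levelSet_subset {u v : ℂ → ℂ} {θ η : ℝ} (hu : WeakPropertyBAt u θ)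
    (hη : η ∈ Set.Ioo (0:ℝ) 1) (hsub : levelSet v η ⊆ levelSet u θ) :
    WeakPropertyBAt v η :=
  ⟨hη, fun z hz =>
    (closure_mono (connectedComponentIn_mono z hsub)).trans (hu.2 z (hsub hz))⟩

/-- The set of inner functions with weak Property 𝔅 is open for the sup norm. -/
theorem stmt11 (u : ℂ → ℂ) (hu : IsInner u) (hWB : ∃ θ, WeakPropertyBAt u θ) :
    ∃ ε > 0, ∀ v : ℂ → ℂ, IsInner v →
      supNormD (fun z => v z - u z) < ε → ∃ θ, WeakPropertyBAt v θ := by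
  obtain ⟨θ, hθu⟩ := hWB
  refine ⟨θ, hθu.1.1, fun v hv hvu => ⟨θ - supNormD (fun z => v z - u z), ?_⟩⟩
  have hdist : ∀ z ∈ Metric.ball (0:ℂ) 1, ‖v z - u z‖ ≤ supNormD (fun z => v z - u z) :=
    fun z => norm_le_supNormD (C := 1 + 1) fun w hw =>
      (norm_sub_le _ _).trans (add_le_add (hv.2.1 w hw) (hu.2.1 w hw))
  have hlevel : θ - supNormD (fun z => v z - u z) ∈ Set.Ioo (0:ℝ) 1 :=
    ⟨sub_pos.2 hvu, by linarith [hθu.1.2, supNormD_nonneg (fun z => v z - u z)]⟩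
  exact hθu.of_levelSet_subset hlevel (levelSet_sub_subset hdist θ)

end
end
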